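/- arXiv:0903.2515 — 7 statements merged into one kernel-verified Lean document; each statement's English description precedes it below -/
import Mathlib

section
/- Let X be an n×p matrix and Σ a p×p symmetric matrix with Δ := XᵀX/n − Σ. Suppose max_{j,k} |Δ_{jk}| ≤ τ. Then for any vector γ ∈ ℝᵖ, index set S with |S| ≤ s, and k₀ > 0 such that ‖γ_{Sᶜ}‖₁ ≤ k₀‖γ_{S}‖₁, one has |‖Xγ‖₂²/n − γᵀΣγ| ≤ s(1+k₀)² τ ‖γ_S‖₂². -/
open Finset

/-!
The difference of the two quadratic forms is `γᵀΔγ`, which the entrywise bound on `Δ` controls by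
`τ ‖γ‖₁²`. On the cone, `‖γ‖₁ ≤ (1 + k₀) ‖γ_S‖₁ ≤ (1 + k₀) √s ‖γ_S‖₂` by Cauchy–Schwarz.
-/

section QuadraticForms

variable {ι m : Type*} [Fintype ι] [Fintype m]

theorem sum_sq_sum_mul_eq_sum_sum_gram {R : Type*} [CommSemiring R] (X : Matrix m ι R)
    (γ : ι → R) :
    ∑ i, (∑ j, X i j * γ j) ^ 2 = ∑ j, ∑ k, γ j * (∑ i, X i j * X i k) * γ k := by
  simp only [sq, mul_sum, sum_mul]
  rw [sum_comm]
  refine sum_congr rfl fun j _ => ?_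
  rw [sum_comm]
  exact sum_congr rfl fun k _ => sum_congr rfl fun i _ => by ring

theorem abs_sum_sum_mul_mul_le_mul_sq_sum_abs (M : ι → ι → ℝ) {τ : ℝ}
    (hM : ∀ j k, |M j k| ≤ τ) (γ : ι → ℝ) :
    |∑ j, ∑ k, γ j * M j k * γ k| ≤ τ * (∑ j, |γ j|) ^ 2 :=
  calc |∑ j, ∑ k, γ j * M j k * γ k|
      ≤ ∑ j, ∑ k, |γ j * M j k * γ k| :=
        (abs_sum_le_sum_abs _ _).trans (sum_le_sum fun j _ => abs_sum_le_sum_abs _ _)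
    _ ≤ ∑ j, ∑ k, |γ j| * τ * |γ k| := by
        gcongr with j _ k _
        rw [abs_mul, abs_mul]
        gcongr
        exact hM j k
    _ = τ * (∑ j, |γ j|) ^ 2 := by
        rw [sq, sum_mul_sum, mul_sum]
        refine sum_congr rfl fun j _ => ?_
        rw [mul_sum]
        exact sum_congr rfl fun k _ => by ring

end QuadraticForms

theorem sq_sum_abs_le_card_mul_sum_sq {ι : Type*} (γ : ι → ℝ) (S : Finset ι) :
    (∑ j ∈ S, |γ j|) ^ 2 ≤ #S * ∑ j ∈ S, γ j ^ 2 := by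
  simpa only [sq_abs] using sq_sum_le_card_mul_sum_sq (s := S) (f := fun j => |γ j|)

section Cone

variable {ι : Type*} [Fintype ι] [DecidableEq ι]

theorem sum_abs_le_of_sum_abs_compl_le {γ : ι → ℝ} {S : Finset ι} {k₀ : ℝ}
    (hcone : ∑ j ∈ Sᶜ, |γ j| ≤ k₀ * ∑ j ∈ S, |γ j|) :
    ∑ j, |γ j| ≤ (1 + k₀) * ∑ j ∈ S, |γ j| := by
  rw [← sum_add_sum_compl S]
  linarith

theorem sq_sum_abs_le_of_sum_abs_compl_le {γ : ι → ℝ} {S : Finset ι} {s : ℕ} {k₀ : ℝ}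
    (hS : #S ≤ s) (hcone : ∑ j ∈ Sᶜ, |γ j| ≤ k₀ * ∑ j ∈ S, |γ j|) :
    (∑ j, |γ j|) ^ 2 ≤ s * (1 + k₀) ^ 2 * ∑ j ∈ S, γ j ^ 2 := by
  have hS' : (#S : ℝ) ≤ s := by exact_mod_cast hS
  calc (∑ j, |γ j|) ^ 2 ≤ ((1 + k₀) * ∑ j ∈ S, |γ j|) ^ 2 :=
        pow_le_pow_left₀ (sum_nonneg fun _ _ => abs_nonneg _)
          (sum_abs_le_of_sum_abs_compl_le hcone) 2
    _ = (1 + k₀) ^ 2 * (∑ j ∈ S, |γ j|) ^ 2 := mul_pow _ _ 2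
    _ ≤ (1 + k₀) ^ 2 * (s * ∑ j ∈ S, γ j ^ 2) := by
        gcongr
        exact (sq_sum_abs_le_card_mul_sum_sq γ S).trans
          (mul_le_mul_of_nonneg_right hS' (sum_nonneg fun _ _ => sq_nonneg _))
    _ = s * (1 + k₀) ^ 2 * ∑ j ∈ S, γ j ^ 2 := by ring

end Cone

theorem empirical_population_quadratic_form_bound_general (n p s : ℕ)
    (X : Matrix (Fin n) (Fin p) ℝ) (Sig : Matrix (Fin p) (Fin p) ℝ)
    (τ : ℝ) (hτ : 0 ≤ τ)
    (hΔ : ∀ j k, |(∑ i, X i j * X i k) / n - Sig j k| ≤ τ)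
    (γ : Fin p → ℝ) (S : Finset (Fin p)) (hS : S.card ≤ s)
    (k₀ : ℝ)
    (hcone : (∑ j ∈ Sᶜ, |γ j|) ≤ k₀ * ∑ j ∈ S, |γ j|) :
    |(∑ i, (∑ j, X i j * γ j) ^ 2) / n - ∑ j, ∑ k, γ j * Sig j k * γ k| ≤
      s * (1 + k₀) ^ 2 * τ * ∑ j ∈ S, γ j ^ 2 := by
  have hdiff : (∑ i, (∑ j, X i j * γ j) ^ 2) / n - ∑ j, ∑ k, γ j * Sig j k * γ k
      = ∑ j, ∑ k, γ j * ((∑ i, X i j * X i k) / n - Sig j k) * γ k := by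
    rw [sum_sq_sum_mul_eq_sum_sum_gram, sum_div, ← sum_sub_distrib]
    refine sum_congr rfl fun j _ => ?_
    rw [sum_div, ← sum_sub_distrib]
    exact sum_congr rfl fun k _ => by ring
  calc _ = |∑ j, ∑ k, γ j * ((∑ i, X i j * X i k) / n - Sig j k) * γ k| := by rw [hdiff]
    _ ≤ τ * (∑ j, |γ j|) ^ 2 := abs_sum_sum_mul_mul_le_mul_sq_sum_abs _ hΔ γ
    _ ≤ τ * (s * (1 + k₀) ^ 2 * ∑ j ∈ S, γ j ^ 2) :=
        mul_le_mul_of_nonneg_left (sq_sum_abs_le_of_sum_abs_compl_le hS hcone) hτ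
    _ = s * (1 + k₀) ^ 2 * τ * ∑ j ∈ S, γ j ^ 2 := by ring

/-- Deterministic comparison of empirical and population quadratic forms:
if every entry of `Δ = XᵀX/n − Σ` is bounded by `τ`, then for every `γ` in the
cone `‖γ_{Sᶜ}‖₁ ≤ k₀ ‖γ_S‖₁` with `|S| ≤ s`,
`|‖Xγ‖₂²/n − γᵀΣγ| ≤ s (1+k₀)² τ ‖γ_S‖₂²`. -/
theorem empirical_population_quadratic_form_bound (n p s : ℕ) (hn : 0 < n)
    (X : Matrix (Fin n) (Fin p) ℝ) (Sig : Matrix (Fin p) (Fin p) ℝ)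
    (hsym : Sig.IsSymm) (τ : ℝ) (hτ : 0 ≤ τ)
    (hΔ : ∀ j k, |(∑ i, X i j * X i k) / n - Sig j k| ≤ τ)
    (γ : Fin p → ℝ) (S : Finset (Fin p)) (hS : S.card ≤ s)
    (k₀ : ℝ) (hk₀ : 0 < k₀)
    (hcone : (∑ j ∈ Sᶜ, |γ j|) ≤ k₀ * ∑ j ∈ S, |γ j|) :
    |(∑ i, (∑ j, X i j * γ j) ^ 2) / n - ∑ j, ∑ k, γ j * Sig j k * γ k| ≤
      s * (1 + k₀) ^ 2 * τ * ∑ j ∈ S, γ j ^ 2 :=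
  empirical_population_quadratic_form_bound_general n p s X Sig τ hτ hΔ γ S hS k₀ hcone
end

section
/- Let Σ satisfy RE(s, s, k₀, Σ) with constant K = K(s,s,k₀,Σ). If max_{j,k}|XᵀX/n − Σ|_{jk} ≤ C₂√(log p / n) and s ≤ √(n/log p) / (32 C₂ K²(s,3,3,Σ)) with k₀ ≤ 3, then X satisfies the restricted eigenvalue condition RE(s, s, k₀, X) with constant K(s,s,k₀,X) ≤ √2 · K(s,s,k₀,Σ). -/
/-!
On the `k₀`-cone of a set `J₀` with `|J₀| ≤ s`, `‖γ‖₁ ≤ (1 + k₀)‖γ_{J₀}‖₁ ≤ 4 √s ‖γ_{J₀}‖₂`, and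
`RE(s, 3, 3, Σ)` bounds `‖γ_{J₀}‖₂` by `K₃ √(γᵀΣγ)`. Hence the entrywise deviation `δ` of `XᵀX/n`
from `Σ` perturbs the quadratic form by at most `δ ‖γ‖₁² ≤ 16 δ s K₃² · γᵀΣγ`, which the sparsity
assumption makes at most `γᵀΣγ / 2`. So `‖Xγ‖₂² / n ≥ γᵀΣγ / 2` on the cone, and the RE constant
of `Σ` transfers to `X` at the cost of a factor `√2`.
-/

open Finset

/-- Restricted eigenvalue condition `RE(s, m, k₀, ·)` with constant `K` for a
quadratic-form norm `Q` (e.g. `Q γ = ‖Σ^{1/2}γ‖₂` or `Q γ = ‖Xγ‖₂/√n`): for all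
`|J₀| ≤ s` and `γ ≠ 0` in the cone `‖γ_{J₀ᶜ}‖₁ ≤ k₀‖γ_{J₀}‖₁`, and `J₁` a set of
(at most) `m` largest-in-absolute-value coordinates of `γ` outside `J₀`,
`‖γ_{J₀ ∪ J₁}‖₂ ≤ K · Q γ`. -/
def RECond (p s m : ℕ) (k₀ K : ℝ) (Q : (Fin p → ℝ) → ℝ) : Prop :=
  ∀ J₀ : Finset (Fin p), J₀.card ≤ s →
    ∀ γ : Fin p → ℝ, γ ≠ 0 →
      (∑ j ∈ J₀ᶜ, |γ j|) ≤ k₀ * ∑ j ∈ J₀, |γ j| →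
      ∀ J₁ : Finset (Fin p), J₁ ⊆ J₀ᶜ → J₁.card ≤ m →
        (∀ a ∈ J₁, ∀ b ∈ J₀ᶜ \ J₁, |γ b| ≤ |γ a|) →
        Real.sqrt (∑ j ∈ J₀ ∪ J₁, γ j ^ 2) ≤ K * Q γ

theorem Real.sqrt_div_mul_sqrt_div_le_one (a b : ℝ) : √(a / b) * √(b / a) ≤ 1 := by
  rw [← inv_div a b, Real.sqrt_inv]
  exact mul_inv_le_one

section QuadraticForm

variable {ι : Type*} [Fintype ι]

theorem Matrix.PosSemidef.sum_sum_mul_mul_nonneg {M : Matrix ι ι ℝ} (hM : M.PosSemidef)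
    (γ : ι → ℝ) : 0 ≤ ∑ j, ∑ k, γ j * M j k * γ k := by
  simpa [dotProduct, mulVec, mul_sum, mul_assoc] using hM.dotProduct_mulVec_nonneg γ

theorem sum_sq_div_eq_sum_sum_gram {m : Type*} [Fintype m] (X : Matrix m ι ℝ) (γ : ι → ℝ)
    (c : ℝ) : (∑ i, (∑ j, X i j * γ j) ^ 2) / c =
      ∑ j, ∑ k, γ j * ((∑ i, X i j * X i k) / c) * γ k := by
  simp_rw [sq, sum_mul_sum, sum_div, mul_sum, sum_mul]
  rw [sum_comm]
  refine sum_congr rfl fun j _ => ?_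
  rw [sum_comm]
  exact sum_congr rfl fun k _ => sum_congr rfl fun i _ => by ring

theorem sum_sum_mul_mul_sub_le {M N : Matrix ι ι ℝ} {δ : ℝ} (h : ∀ j k, |M j k - N j k| ≤ δ)
    (γ : ι → ℝ) :
    ∑ j, ∑ k, γ j * M j k * γ k - ∑ j, ∑ k, γ j * N j k * γ k ≤ δ * (∑ j, |γ j|) ^ 2 :=
  calc ∑ j, ∑ k, γ j * M j k * γ k - ∑ j, ∑ k, γ j * N j k * γ k
      = ∑ j, ∑ k, γ j * (M j k - N j k) * γ k := by
        simp only [← sum_sub_distrib, mul_sub, sub_mul]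
    _ ≤ ∑ j, ∑ k, |γ j| * δ * |γ k| := by
        refine sum_le_sum fun j _ => sum_le_sum fun k _ => (le_abs_self _).trans ?_
        rw [abs_mul, abs_mul]
        gcongr
        exact h j k
    _ = δ * (∑ j, |γ j|) ^ 2 := by
        rw [sq, sum_mul_sum, mul_sum]
        exact sum_congr rfl fun j _ => by rw [mul_sum]; exact sum_congr rfl fun k _ => by ring

end QuadraticForm

namespace RECond

variable {p s m : ℕ} {k₀ K : ℝ} {Q : (Fin p → ℝ) → ℝ}

theorem of_forall_cone_le {Q' : (Fin p → ℝ) → ℝ} {c : ℝ} (h : RECond p s m k₀ K Q) (hK : 0 ≤ K)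
    (hQ : ∀ J₀ : Finset (Fin p), J₀.card ≤ s → ∀ γ : Fin p → ℝ, γ ≠ 0 →
      (∑ j ∈ J₀ᶜ, |γ j|) ≤ k₀ * ∑ j ∈ J₀, |γ j| → Q γ ≤ c * Q' γ) :
    RECond p s m k₀ (c * K) Q' := by
  intro J₀ hJ₀ γ hγ hcone J₁ hJ₁ hJ₁card hdom
  calc √(∑ j ∈ J₀ ∪ J₁, γ j ^ 2) ≤ K * Q γ := h J₀ hJ₀ γ hγ hcone J₁ hJ₁ hJ₁card hdom
    _ ≤ K * (c * Q' γ) := by gcongr; exact hQ J₀ hJ₀ γ hγ hcone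
    _ = c * K * Q' γ := by ring

theorem sum_sq_le (h : RECond p s m k₀ K Q) {J₀ : Finset (Fin p)} (hJ₀ : J₀.card ≤ s)
    {γ : Fin p → ℝ} (hγ : γ ≠ 0) (hcone : ∑ j ∈ J₀ᶜ, |γ j| ≤ k₀ * ∑ j ∈ J₀, |γ j|) :
    ∑ j ∈ J₀, γ j ^ 2 ≤ (K * Q γ) ^ 2 := by
  have h₀ := h J₀ hJ₀ γ hγ hcone ∅ (empty_subset _) (by simp) (by simp)
  rw [union_empty] at h₀
  calc ∑ j ∈ J₀, γ j ^ 2 = √(∑ j ∈ J₀, γ j ^ 2) ^ 2 := (Real.sq_sqrt (by positivity)).symm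
    _ ≤ (K * Q γ) ^ 2 := by gcongr

theorem sq_sum_abs_le (h : RECond p s m k₀ K Q) {J₀ : Finset (Fin p)} (hJ₀ : J₀.card ≤ s)
    {γ : Fin p → ℝ} (hγ : γ ≠ 0) (hcone : ∑ j ∈ J₀ᶜ, |γ j| ≤ k₀ * ∑ j ∈ J₀, |γ j|) :
    (∑ j, |γ j|) ^ 2 ≤ (1 + k₀) ^ 2 * s * (K * Q γ) ^ 2 := by
  have hl1 : ∑ j, |γ j| ≤ (1 + k₀) * ∑ j ∈ J₀, |γ j| := by
    rw [← sum_add_sum_compl J₀]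
    linarith
  have hCS : (∑ j ∈ J₀, |γ j|) ^ 2 ≤ s * ∑ j ∈ J₀, γ j ^ 2 := by
    refine sq_sum_le_card_mul_sum_sq.trans ?_
    simp only [sq_abs]
    gcongr
  calc (∑ j, |γ j|) ^ 2 ≤ ((1 + k₀) * ∑ j ∈ J₀, |γ j|) ^ 2 := by gcongr
    _ = (1 + k₀) ^ 2 * (∑ j ∈ J₀, |γ j|) ^ 2 := mul_pow _ _ _
    _ ≤ (1 + k₀) ^ 2 * (s * (K * Q γ) ^ 2) := by
        gcongr
        exact hCS.trans (by gcongr; exact h.sum_sq_le hJ₀ hγ hcone)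
    _ = (1 + k₀) ^ 2 * s * (K * Q γ) ^ 2 := by ring

end RECond

theorem RE_transfer_population_to_empirical_general (n p s : ℕ)
    (X : Matrix (Fin n) (Fin p) ℝ) (Sig : Matrix (Fin p) (Fin p) ℝ)
    (hPSD : Sig.PosSemidef)
    (k₀ : ℝ) (hk₀3 : k₀ ≤ 3) (C₂ : ℝ) (hC₂ : 0 < C₂)
    (K K₃ : ℝ) (hK : 0 < K) (hK₃ : 0 < K₃)
    (hRE : RECond p s s k₀ K
      (fun γ => Real.sqrt (∑ j, ∑ k, γ j * Sig j k * γ k)))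
    (hRE3 : RECond p s 3 3 K₃
      (fun γ => Real.sqrt (∑ j, ∑ k, γ j * Sig j k * γ k)))
    (hΔ : ∀ j k, |(∑ i, X i j * X i k) / n - Sig j k| ≤ C₂ * Real.sqrt (Real.log p / n))
    (hs : (s : ℝ) ≤ Real.sqrt (n / Real.log p) / (32 * C₂ * K₃ ^ 2)) :
    RECond p s s k₀ (Real.sqrt 2 * K)
      (fun γ => Real.sqrt ((∑ i, (∑ j, X i j * γ j) ^ 2) / n)) := by
  refine hRE.of_forall_cone_le hK.le fun J₀ hJ₀ γ hγ hcone => ?_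
  set B := ∑ j, ∑ k, γ j * Sig j k * γ k
  set δ := C₂ * √(Real.log p / n)
  have hB : 0 ≤ B := hPSD.sum_sum_mul_mul_nonneg γ
  have hl1 : (∑ j, |γ j|) ^ 2 ≤ 16 * s * K₃ ^ 2 * B := by
    have h := hRE3.sq_sum_abs_le hJ₀ hγ (hcone.trans (by gcongr))
    rw [mul_pow, Real.sq_sqrt hB] at h
    linarith
  have hsmall : δ * (16 * s * K₃ ^ 2) ≤ 1 / 2 :=
    calc δ * (16 * s * K₃ ^ 2)
        ≤ δ * (16 * (√(n / Real.log p) / (32 * C₂ * K₃ ^ 2)) * K₃ ^ 2) := by gcongr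
      _ = √(Real.log p / n) * √(n / Real.log p) / 2 := by field_simp; ring
      _ ≤ 1 / 2 := by gcongr; exact Real.sqrt_div_mul_sqrt_div_le_one _ _
  have hdev := sum_sum_mul_mul_sub_le (fun j k => (abs_sub_comm _ _).trans_le (hΔ j k)) γ
  rw [sum_sq_div_eq_sum_sum_gram, ← Real.sqrt_mul zero_le_two]
  refine Real.sqrt_le_sqrt ?_
  nlinarith [mul_le_mul_of_nonneg_left hl1 (by positivity : 0 ≤ δ),
    mul_le_mul_of_nonneg_right hsmall hB]

/-- If `Σ` satisfies `RE(s, s, k₀, Σ)` with constant `K`, the empirical covariance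
`XᵀX/n` is entrywise within `C₂ √(log p / n)` of `Σ`, and
`s ≤ √(n / log p) / (32 C₂ K²(s,3,3,Σ))` with `k₀ ≤ 3`, then `X` satisfies
`RE(s, s, k₀, X)` with constant at most `√2 · K`. -/
theorem RE_transfer_population_to_empirical (n p s : ℕ) (hn : 0 < n) (hp : 2 ≤ p)
    (X : Matrix (Fin n) (Fin p) ℝ) (Sig : Matrix (Fin p) (Fin p) ℝ)
    (hsym : Sig.IsSymm) (hPSD : Sig.PosSemidef) (hdiag : ∀ j, Sig j j = 1)
    (k₀ : ℝ) (hk₀ : 0 < k₀) (hk₀3 : k₀ ≤ 3) (C₂ : ℝ) (hC₂ : 0 < C₂)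
    (K K₃ : ℝ) (hK : 0 < K) (hK₃ : 0 < K₃)
    (hRE : RECond p s s k₀ K
      (fun γ => Real.sqrt (∑ j, ∑ k, γ j * Sig j k * γ k)))
    (hRE3 : RECond p s 3 3 K₃
      (fun γ => Real.sqrt (∑ j, ∑ k, γ j * Sig j k * γ k)))
    (hΔ : ∀ j k, |(∑ i, X i j * X i k) / n - Sig j k| ≤ C₂ * Real.sqrt (Real.log p / n))
    (hs : (s : ℝ) ≤ Real.sqrt (n / Real.log p) / (32 * C₂ * K₃ ^ 2)) :
    RECond p s s k₀ (Real.sqrt 2 * K)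
      (fun γ => Real.sqrt ((∑ i, (∑ j, X i j * γ j) ^ 2) / n)) :=
  RE_transfer_population_to_empirical_general n p s X Sig hPSD k₀ hk₀3 C₂ hC₂ K K₃ hK hK₃ hRE hRE3
    hΔ hs
end

section
/- Under the conditions of the previous lemma (basic Lasso inequality on the event ‖Xᵀε/n‖_∞ ≤ λ/2) and assuming the restricted eigenvalue condition RE(s, 3, X) with constant K = K(s,3,X), where s = |S|, the Lasso error δ = β_init − β* satisfies ‖δ_S‖₂ ≤ 4K²λ√s and ‖δ‖₁ ≤ 4K²λs. -/
open Finset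

/-!
On the event `‖Xᵀε/n‖_∞ ≤ λ/2`, comparing the Lasso objective at `β_init` and at `β*` gives the
basic inequality `‖Xδ‖₂²/n + λ‖δ‖₁ ≤ 4λ‖δ_S‖₁`. Dropping the first term puts `δ` in the cone
`‖δ_{Sᶜ}‖₁ ≤ 3‖δ_S‖₁`, where the restricted eigenvalue condition gives `‖δ_S‖₂ ≤ K‖Xδ‖₂/√n`.
Together with Cauchy–Schwarz `‖δ_S‖₁ ≤ √s‖δ_S‖₂` this leaves a quadratic inequality in
`t = ‖Xδ‖₂/√n` that yields both bounds.
-/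

section LassoBasicInequality

variable {ι κ : Type*} [Fintype ι] [Fintype κ]

theorem sum_abs_sub_sum_abs_le_of_support [DecidableEq κ] (S : Finset κ) {βstar : κ → ℝ}
    (hsupp : ∀ j ∉ S, βstar j = 0) (β : κ → ℝ) :
    ∑ j, |βstar j| - ∑ j, |β j| ≤ ∑ j ∈ S, |β j - βstar j| - ∑ j ∈ Sᶜ, |β j - βstar j| := by
  have hS : ∑ j ∈ S, (|βstar j| - |β j|) ≤ ∑ j ∈ S, |β j - βstar j| :=
    sum_le_sum fun j _ => by
      simpa only [abs_sub_comm (βstar j)] using abs_sub_abs_le_abs_sub (βstar j) (β j)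
  have hSc : ∑ j ∈ Sᶜ, (|βstar j| - |β j|) = -∑ j ∈ Sᶜ, |β j - βstar j| := by
    rw [← sum_neg_distrib]
    refine sum_congr rfl fun j hj => ?_
    simp [hsupp j (mem_compl.mp hj)]
  rw [← sum_add_sum_compl S (fun j => |βstar j|), ← sum_add_sum_compl S (fun j => |β j|)]
  rw [sum_sub_distrib] at hS hSc
  linarith

theorem sum_mul_sum_mul_le_mul_sum_abs {X : Matrix ι κ ℝ} {ε : ι → ℝ} {c : ℝ}
    (h : ∀ j, |∑ i, X i j * ε i| ≤ c) (δ : κ → ℝ) :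
    ∑ i, ε i * ∑ j, X i j * δ j ≤ c * ∑ j, |δ j| := by
  have hswap : ∑ i, ε i * ∑ j, X i j * δ j = ∑ j, δ j * ∑ i, X i j * ε i := by
    simp only [mul_sum]
    rw [sum_comm]
    exact sum_congr rfl fun j _ => sum_congr rfl fun i _ => by ring
  rw [hswap, mul_sum]
  refine sum_le_sum fun j _ => ?_
  calc δ j * ∑ i, X i j * ε i ≤ |δ j| * |∑ i, X i j * ε i| := by
        rw [← abs_mul]; exact le_abs_self _
    _ ≤ |δ j| * c := mul_le_mul_of_nonneg_left (h j) (abs_nonneg _)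
    _ = c * |δ j| := mul_comm _ _

theorem lasso_basic_inequality {X : Matrix ι κ ℝ} {βstar βhat : κ → ℝ} {ε : ι → ℝ}
    {n lam : ℝ} (hn : 0 < n)
    (hmin : (1 / (2 * n)) * (∑ i, ((∑ j, X i j * βstar j) + ε i - ∑ j, X i j * βhat j) ^ 2)
          + lam * ∑ j, |βhat j| ≤
        (1 / (2 * n)) * (∑ i, ((∑ j, X i j * βstar j) + ε i - ∑ j, X i j * βstar j) ^ 2)
          + lam * ∑ j, |βstar j|) :
    ∑ i, (∑ j, X i j * (βhat j - βstar j)) ^ 2 ≤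
      2 * ∑ i, ε i * ∑ j, X i j * (βhat j - βstar j)
        + 2 * n * lam * (∑ j, |βstar j| - ∑ j, |βhat j|) := by
  have hres : ∀ i, (∑ j, X i j * βstar j) + ε i - ∑ j, X i j * βhat j
      = ε i - ∑ j, X i j * (βhat j - βstar j) := fun i => by
    simp only [mul_sub, sum_sub_distrib]; ring
  have hexpand : ∑ i, (ε i - ∑ j, X i j * (βhat j - βstar j)) ^ 2
      = ∑ i, ε i ^ 2 - 2 * ∑ i, ε i * ∑ j, X i j * (βhat j - βstar j)
        + ∑ i, (∑ j, X i j * (βhat j - βstar j)) ^ 2 := by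
    rw [mul_sum, ← sum_sub_distrib, ← sum_add_distrib]
    exact sum_congr rfl fun i _ => by ring
  simp only [hres, add_sub_cancel_left, hexpand] at hmin
  field_simp at hmin
  linarith

theorem lasso_cone_and_prediction_bound [DecidableEq κ] {X : Matrix ι κ ℝ} {βstar βhat : κ → ℝ} {ε : ι → ℝ}
    {n lam : ℝ} (S : Finset κ) (hn : 0 < n) (hlam : 0 < lam)
    (hnoise : ∀ j, |(∑ i, X i j * ε i) / n| ≤ lam / 2)
    (hmin : (1 / (2 * n)) * (∑ i, ((∑ j, X i j * βstar j) + ε i - ∑ j, X i j * βhat j) ^ 2)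
          + lam * ∑ j, |βhat j| ≤
        (1 / (2 * n)) * (∑ i, ((∑ j, X i j * βstar j) + ε i - ∑ j, X i j * βstar j) ^ 2)
          + lam * ∑ j, |βstar j|)
    (hsupp : ∀ j ∉ S, βstar j = 0) :
    ∑ j ∈ Sᶜ, |βhat j - βstar j| ≤ 3 * ∑ j ∈ S, |βhat j - βstar j| ∧
      (∑ i, (∑ j, X i j * (βhat j - βstar j)) ^ 2) / n + lam * ∑ j, |βhat j - βstar j| ≤
        4 * lam * ∑ j ∈ S, |βhat j - βstar j| := by
  have hnoise' : ∀ j, |∑ i, X i j * ε i| ≤ n * (lam / 2) := fun j => by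
    have h := hnoise j
    rwa [abs_div, abs_of_pos hn, div_le_iff₀ hn, mul_comm] at h
  have hbasic := lasso_basic_inequality hn hmin
  have hcross := sum_mul_sum_mul_le_mul_sum_abs hnoise' (fun j => βhat j - βstar j)
  have hsplit := (sum_add_sum_compl S fun j => |βhat j - βstar j|).symm
  have hl1 := sum_abs_sub_sum_abs_le_of_support S hsupp βhat
  have hpred : ∑ i, (∑ j, X i j * (βhat j - βstar j)) ^ 2 ≤
      n * lam * (3 * ∑ j ∈ S, |βhat j - βstar j| - ∑ j ∈ Sᶜ, |βhat j - βstar j|) := by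
    rw [hsplit] at hcross
    nlinarith [mul_le_mul_of_nonneg_left hl1 (by positivity : (0 : ℝ) ≤ 2 * n * lam)]
  have hA : 0 ≤ ∑ i, (∑ j, X i j * (βhat j - βstar j)) ^ 2 := by positivity
  refine ⟨by nlinarith [mul_pos hn hlam], ?_⟩
  rw [hsplit, div_add' _ _ _ hn.ne', div_le_iff₀ hn]
  linarith

end LassoBasicInequality

theorem sum_abs_le_sqrt_card_mul_sqrt_sum_sq {κ : Type*} (s : Finset κ) (f : κ → ℝ) :
    ∑ j ∈ s, |f j| ≤ Real.sqrt #s * Real.sqrt (∑ j ∈ s, f j ^ 2) := by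
  rw [← Real.sqrt_mul (Nat.cast_nonneg _)]
  refine Real.le_sqrt_of_sq_le ?_
  simpa only [sq_abs] using sq_sum_le_card_mul_sum_sq (s := s) (f := fun j => |f j|)

theorem le_and_le_of_sq_add_le_of_le_mul {t e L c lam K : ℝ} (hlam : 0 < lam) (hc : 0 ≤ c)
    (he : 0 ≤ e) (hL : 0 ≤ L) (hbasic : t ^ 2 + lam * L ≤ 4 * lam * (c * e))
    (hRE : e ≤ K * t) :
    e ≤ 4 * K ^ 2 * lam * c ∧ L ≤ 4 * K ^ 2 * lam * c ^ 2 := by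
  have hce : c * e ≤ c * (K * t) := mul_le_mul_of_nonneg_left hRE hc
  constructor
  · rcases he.eq_or_lt with rfl | hepos
    · positivity
    have hsq : e ^ 2 ≤ (K * t) ^ 2 := pow_le_pow_left₀ he hRE 2
    have ht : K ^ 2 * t ^ 2 ≤ K ^ 2 * (4 * lam * (c * e)) :=
      mul_le_mul_of_nonneg_left (by nlinarith) (sq_nonneg K)
    nlinarith
  · -- `4λcKt - t² ≤ (2λcK)²`
    have hlamL : lam * L ≤ lam * (4 * K ^ 2 * lam * c ^ 2) := by
      nlinarith [sq_nonneg (t - 2 * lam * c * K)]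
    exact le_of_mul_le_mul_left hlamL hlam

theorem lasso_l2_l1_error_bounds_general (n p : ℕ) (hn : 0 < n)
    (X : Matrix (Fin n) (Fin p) ℝ) (βstar : Fin p → ℝ) (ε : Fin n → ℝ)
    (lam : ℝ) (hlam : 0 < lam)
    (hnoise : ∀ j : Fin p, |(∑ i, X i j * ε i) / n| ≤ lam / 2)
    (βinit : Fin p → ℝ)
    (hmin : ∀ β : Fin p → ℝ,
      (1 / (2 * n)) * (∑ i, ((∑ j, X i j * βstar j) + ε i - ∑ j, X i j * βinit j) ^ 2)
          + lam * ∑ j, |βinit j| ≤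
        (1 / (2 * n)) * (∑ i, ((∑ j, X i j * βstar j) + ε i - ∑ j, X i j * β j) ^ 2)
          + lam * ∑ j, |β j|)
    (S : Finset (Fin p)) (hS : S = Finset.univ.filter (fun j => βstar j ≠ 0))
    (K : ℝ)
    (hRE : ∀ J₀ : Finset (Fin p), J₀.card ≤ S.card →
      ∀ γ : Fin p → ℝ, γ ≠ 0 →
        (∑ j ∈ J₀ᶜ, |γ j|) ≤ 3 * ∑ j ∈ J₀, |γ j| →
        Real.sqrt n * Real.sqrt (∑ j ∈ J₀, γ j ^ 2) ≤
          K * Real.sqrt (∑ i, (∑ j, X i j * γ j) ^ 2)) :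
    Real.sqrt (∑ j ∈ S, (βinit j - βstar j) ^ 2) ≤
        4 * K ^ 2 * lam * Real.sqrt S.card ∧
      (∑ j, |βinit j - βstar j|) ≤ 4 * K ^ 2 * lam * S.card := by
  have hn' : (0 : ℝ) < n := Nat.cast_pos.mpr hn
  have hsupp : ∀ j ∉ S, βstar j = 0 := by simp [hS]
  obtain ⟨hcone, hbasic⟩ := lasso_cone_and_prediction_bound S hn' hlam hnoise (hmin βstar) hsupp
  set δ : Fin p → ℝ := fun j => βinit j - βstar j
  set A := ∑ i, (∑ j, X i j * δ j) ^ 2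
  have hRE' : Real.sqrt (∑ j ∈ S, δ j ^ 2) ≤ K * Real.sqrt (A / n) := by
    rw [Real.sqrt_div' _ hn'.le, mul_div_assoc', le_div_iff₀ (Real.sqrt_pos.mpr hn'), mul_comm]
    by_cases hδ : δ = 0
    · simp [A, hδ]
    · exact hRE S le_rfl δ hδ hcone
  have hquad : Real.sqrt (A / n) ^ 2 + lam * ∑ j, |δ j| ≤
      4 * lam * (Real.sqrt S.card * Real.sqrt (∑ j ∈ S, δ j ^ 2)) := by
    rw [Real.sq_sqrt (by positivity)]
    nlinarith [sum_abs_le_sqrt_card_mul_sqrt_sum_sq S δ]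
  have hbounds := le_and_le_of_sq_add_le_of_le_mul hlam (Real.sqrt_nonneg _)
    (Real.sqrt_nonneg _) (by positivity) hquad hRE'
  rwa [Real.sq_sqrt (Nat.cast_nonneg _)] at hbounds

/-- ℓ₂/ℓ₁ bounds for the Lasso error under `RE(s, 3, X)`: on the event
`‖Xᵀε/n‖_∞ ≤ λ/2`, with `S = supp(β*)`, `s = |S|` and RE constant `K`, the Lasso
error `δ = β_init − β*` satisfies `‖δ_S‖₂ ≤ 4K²λ√s` and `‖δ‖₁ ≤ 4K²λs`. -/
theorem lasso_l2_l1_error_bounds (n p : ℕ) (hn : 0 < n)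
    (X : Matrix (Fin n) (Fin p) ℝ) (βstar : Fin p → ℝ) (ε : Fin n → ℝ)
    (lam : ℝ) (hlam : 0 < lam)
    (hnoise : ∀ j : Fin p, |(∑ i, X i j * ε i) / n| ≤ lam / 2)
    (βinit : Fin p → ℝ)
    (hmin : ∀ β : Fin p → ℝ,
      (1 / (2 * n)) * (∑ i, ((∑ j, X i j * βstar j) + ε i - ∑ j, X i j * βinit j) ^ 2)
          + lam * ∑ j, |βinit j| ≤
        (1 / (2 * n)) * (∑ i, ((∑ j, X i j * βstar j) + ε i - ∑ j, X i j * β j) ^ 2)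
          + lam * ∑ j, |β j|)
    (S : Finset (Fin p)) (hS : S = Finset.univ.filter (fun j => βstar j ≠ 0))
    (K : ℝ) (hK : 0 < K)
    (hRE : ∀ J₀ : Finset (Fin p), J₀.card ≤ S.card →
      ∀ γ : Fin p → ℝ, γ ≠ 0 →
        (∑ j ∈ J₀ᶜ, |γ j|) ≤ 3 * ∑ j ∈ J₀, |γ j| →
        Real.sqrt n * Real.sqrt (∑ j ∈ J₀, γ j ^ 2) ≤
          K * Real.sqrt (∑ i, (∑ j, X i j * γ j) ^ 2)) :
    Real.sqrt (∑ j ∈ S, (βinit j - βstar j) ^ 2) ≤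
        4 * K ^ 2 * lam * Real.sqrt S.card ∧
      (∑ j, |βinit j - βstar j|) ≤ 4 * K ^ 2 * lam * S.card :=
  lasso_l2_l1_error_bounds_general n p hn X βstar ε lam hlam hnoise βinit hmin S hS K hRE
end

section
/- Suppose the Lasso error bounds ‖δ_S‖_∞ ≤ 4K²λ√s (with K = K(s,3,X) ≥ 2) and ‖δ_{Sᶜ}‖₁ ≤ 3K²λs hold, and that β_min := min_{j∈S}|β*_j| ≥ 8K²λ√s. Then the thresholded set S̄ := { j : |β_{j,init}| > 4λ } satisfies S ⊆ S̄ and s ≤ |S̄| ≤ sK². -/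
open Finset

/-! Every true coefficient survives the threshold: `|β_{j,init}| ≥ β_min − ‖δ_S‖_∞ ≥ 4K²λ√s > 4λ`.
Off the support `β_{j,init} = δ_j`, so by a Markov count at most `‖δ_{Sᶜ}‖₁ / 4λ ≤ 3K²s/4`
false coordinates pass it, and `s + 3K²s/4 ≤ sK²` as soon as `K² ≥ 4`. -/

lemma card_filter_lt_mul_le_sum {ι : Type*} (s : Finset ι) {g : ι → ℝ} (hg : ∀ j ∈ s, 0 ≤ g j)
    (t : ℝ) : #(s.filter fun j => t < g j) * t ≤ ∑ j ∈ s, g j :=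
  calc #(s.filter fun j => t < g j) * t
      ≤ ∑ j ∈ s.filter fun j => t < g j, g j := by
        rw [← nsmul_eq_mul]
        exact card_nsmul_le_sum _ _ _ fun j hj => (mem_filter.1 hj).2.le
    _ ≤ ∑ j ∈ s, g j :=
        sum_le_sum_of_subset_of_nonneg (filter_subset _ _) fun j hj _ => hg j hj

lemma le_abs_of_abs_sub_le {x y a : ℝ} (hxy : |x - y| ≤ a) (hy : 2 * a ≤ |y|) : a ≤ |x| := by
  have := abs_sub_abs_le_abs_sub y x
  rw [abs_sub_comm] at this
  linarith

/-- Thresholding procedure: if the Lasso error satisfies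
`‖δ_S‖_∞ ≤ 4K²λ√s` and `‖δ_{Sᶜ}‖₁ ≤ 3K²λs` with `K ≥ 2`, and
`β_min := min_{j∈S} |β*_j| ≥ 8K²λ√s`, then the thresholded set
`S̄ = { j : |β_{j,init}| > 4λ }` satisfies `S ⊆ S̄` and `s ≤ |S̄| ≤ sK²`. -/
theorem thresholding_procedure (p : ℕ) (βstar βinit : Fin p → ℝ)
    (S : Finset (Fin p)) (hS : S = Finset.univ.filter (fun j => βstar j ≠ 0))
    (lam K : ℝ) (hlam : 0 < lam) (hK : 2 ≤ K)
    (hδS : ∀ j ∈ S, |βinit j - βstar j| ≤ 4 * K ^ 2 * lam * Real.sqrt S.card)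
    (hδSc : (∑ j ∈ Sᶜ, |βinit j - βstar j|) ≤ 3 * K ^ 2 * lam * S.card)
    (hβmin : ∀ j ∈ S, 8 * K ^ 2 * lam * Real.sqrt S.card ≤ |βstar j|) :
    S ⊆ Finset.univ.filter (fun j => 4 * lam < |βinit j|) ∧
      (S.card : ℝ) ≤ (Finset.univ.filter (fun j => 4 * lam < |βinit j|)).card ∧
      ((Finset.univ.filter (fun j => 4 * lam < |βinit j|)).card : ℝ) ≤ S.card * K ^ 2 := by
  set T := Finset.univ.filter (fun j => 4 * lam < |βinit j|)
  have hK2 : 4 ≤ K ^ 2 := by nlinarith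
  have hST : S ⊆ T := fun j hj => by
    have hsqrt : 1 ≤ Real.sqrt S.card := Real.one_le_sqrt.2 (by exact_mod_cast card_pos.2 ⟨j, hj⟩)
    have hsurv := le_abs_of_abs_sub_le (hδS j hj) (by linarith [hβmin j hj])
    refine mem_filter.2 ⟨mem_univ j, lt_of_lt_of_le ?_ hsurv⟩
    nlinarith [mul_le_mul_of_nonneg_left hsqrt (by positivity : 0 ≤ K ^ 2 * lam)]
  have hfalse : T \ S ⊆ Sᶜ.filter fun j => 4 * lam < |βinit j - βstar j| := fun j hj => by
    obtain ⟨hjT, hjS⟩ := mem_sdiff.1 hj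
    have hzero : βstar j = 0 := by simpa [hS] using hjS
    simpa [hzero, hjS] using (mem_filter.1 hjT).2
  have hcount : (#(T \ S) : ℝ) * (4 * lam) ≤ 3 * K ^ 2 * lam * #S :=
    calc (#(T \ S) : ℝ) * (4 * lam)
        ≤ #(Sᶜ.filter fun j => 4 * lam < |βinit j - βstar j|) * (4 * lam) := by
          gcongr
      _ ≤ 3 * K ^ 2 * lam * #S :=
          (card_filter_lt_mul_le_sum _ (fun _ _ => abs_nonneg _) _).trans hδSc
  have hsplit : (#T : ℝ) ≤ #(T \ S) + #S := by exact_mod_cast card_le_card_sdiff_add_card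
  have hoff : (#(T \ S) : ℝ) * 4 ≤ 3 * K ^ 2 * #S :=
    le_of_mul_le_mul_right (by linarith) hlam
  refine ⟨hST, by exact_mod_cast card_le_card hST, ?_⟩
  nlinarith [(Nat.cast_nonneg #S : (0 : ℝ) ≤ #S)]
end

section
/- Let X be an n×p matrix, S ⊆ {1,...,p} with |S| ≤ s, suppose the smallest eigenvalue of X_SᵀX_S/n is at least Λ > 0 and the restricted orthogonality constant θ_{1,s} satisfies |⟨X_T c, X_{T'} c'⟩|/n ≤ θ_{1,s}‖c‖₂‖c'‖₂ for all disjoint T, T' with |T| ≤ 1 and |T'| ≤ s. Then r_n := max_{j∈Sᶜ} ‖(X_SᵀX_S)⁻¹X_SᵀX_j‖₁ ≤ θ_{1,s}√s / Λ. -/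
/-!
Put `r = (X_Sᵀ X_S)⁻¹ X_Sᵀ X_j`. Since `X_S r` is the orthogonal projection of `X_j` onto the
column space of `X_S`, `‖X_S r‖₂² = ⟨X_j, X_S r⟩`. The eigenvalue bound gives
`‖X_S r‖₂² / n ≥ Λ ‖r‖₂²`, while restricted orthogonality with `T = {j}`, `T' = S` gives
`⟨X_j, X_S r⟩ / n ≤ θ ‖r‖₂`; hence `‖r‖₂ ≤ θ / Λ`, and Cauchy–Schwarz gives
`‖r‖₁ ≤ √|S| ‖r‖₂ ≤ √s θ / Λ`.
-/

open Finset Matrix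

theorem Matrix.mulVec_injective_of_mul_sum_sq_le {m k : Type*} [Fintype m] [Fintype k]
    {B : Matrix m k ℝ} {Λ c : ℝ} (hΛ : 0 < Λ)
    (h : ∀ v : k → ℝ, Λ * ∑ l, v l ^ 2 ≤ (∑ i, (B *ᵥ v) i ^ 2) / c) :
    Function.Injective B.mulVec := by
  rw [← coe_mulVecLin, injective_iff_map_eq_zero]
  intro v (hv : B *ᵥ v = 0)
  have hsum : ∑ l, v l ^ 2 ≤ 0 :=
    nonpos_of_mul_nonpos_right (by simpa [hv] using h v) hΛ
  have hzero := (sum_eq_zero_iff_of_nonneg fun l _ => sq_nonneg (v l)).1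
    (hsum.antisymm (sum_nonneg fun l _ => sq_nonneg (v l)))
  ext l
  exact pow_eq_zero_iff two_ne_zero |>.1 (hzero l (mem_univ l))

theorem Matrix.isUnit_transpose_mul_self {m k : Type*} [Fintype m] [Fintype k] [DecidableEq k]
    {B : Matrix m k ℝ} (hB : Function.Injective B.mulVec) : IsUnit (Bᵀ * B) := by
  simpa using (PosDef.conjTranspose_mul_self B hB).isUnit

theorem Matrix.sum_sq_mulVec_gram_inv {m k : Type*} [Fintype m] [Fintype k] [DecidableEq k]
    {B : Matrix m k ℝ} (hB : IsUnit (Bᵀ * B)) (y : m → ℝ) :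
    ∑ i, (B *ᵥ (Bᵀ * B)⁻¹ *ᵥ Bᵀ *ᵥ y) i ^ 2 = ∑ i, y i * (B *ᵥ (Bᵀ * B)⁻¹ *ᵥ Bᵀ *ᵥ y) i := by
  set r := (Bᵀ * B)⁻¹ *ᵥ Bᵀ *ᵥ y
  have hnormal : (Bᵀ * B) *ᵥ r = Bᵀ *ᵥ y := by
    rw [mulVec_mulVec, mul_nonsing_inv _ ((isUnit_iff_isUnit_det _).1 hB), one_mulVec]
  calc ∑ i, (B *ᵥ r) i ^ 2 = r ⬝ᵥ ((Bᵀ * B) *ᵥ r) := by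
        rw [← mulVec_mulVec, dotProduct_mulVec, vecMul_transpose]
        simp only [dotProduct, sq]
    _ = ∑ i, y i * (B *ᵥ r) i := by
        rw [hnormal, dotProduct_mulVec, vecMul_transpose, dotProduct_comm]
        rfl

theorem Matrix.of_singleton_mulVec_one {m p R : Type*} [Fintype m] [DecidableEq p] [Semiring R]
    (X : Matrix m p R) (j : p) :
    (Matrix.of fun i (k : {k // k ∈ ({j} : Finset p)}) => X i k.1) *ᵥ (fun _ => 1) =
      fun i => X i j := by
  ext i
  simp [mulVec, dotProduct]

theorem Real.sum_abs_le_sqrt_card_mul_sqrt_sum_sq {ι : Type*} [Fintype ι] (f : ι → ℝ) :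
    ∑ i, |f i| ≤ √(Fintype.card ι) * √(∑ i, f i ^ 2) := by
  simpa [sq_abs] using Real.sum_mul_le_sqrt_mul_sqrt univ (fun _ => 1) (fun i => |f i|)

theorem le_div_of_mul_sq_le_mul {Λ θ t : ℝ} (hΛ : 0 < Λ) (hθ : 0 ≤ θ) (ht : 0 ≤ t)
    (h : Λ * t ^ 2 ≤ θ * t) : t ≤ θ / Λ := by
  rw [le_div_iff₀ hΛ]
  rcases ht.eq_or_lt with rfl | ht
  · simpa using hθ
  · nlinarith

theorem rn_bound_via_restricted_orthogonality_general (n p s : ℕ)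
    (X : Matrix (Fin n) (Fin p) ℝ)
    (S : Finset (Fin p)) (hScard : S.card ≤ s)
    (Λ : ℝ) (hΛ : 0 < Λ)
    (XS : Matrix (Fin n) {j // j ∈ S} ℝ) (hXS : XS = Matrix.of fun i j => X i j.1)
    (heig : ∀ v : {j // j ∈ S} → ℝ,
      Λ * ∑ k, v k ^ 2 ≤ (∑ i, (XS.mulVec v i) ^ 2) / n)
    (θ : ℝ) (hθnn : 0 ≤ θ)
    (hθ : ∀ T T' : Finset (Fin p), Disjoint T T' → T.card ≤ 1 → T'.card ≤ s →
      ∀ (c : {j // j ∈ T} → ℝ) (c' : {j // j ∈ T'} → ℝ),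
        |(∑ i, ((Matrix.of fun i (j : {j // j ∈ T}) => X i j.1).mulVec c i) *
            ((Matrix.of fun i (j : {j // j ∈ T'}) => X i j.1).mulVec c' i)) / n| ≤
          θ * Real.sqrt (∑ k, c k ^ 2) * Real.sqrt (∑ k, c' k ^ 2)) :
    ∀ j ∉ S,
      (∑ k, |((XSᵀ * XS)⁻¹.mulVec (XSᵀ.mulVec fun i => X i j)) k|) ≤
        θ * Real.sqrt s / Λ := by
  intro j hj
  set r := (XSᵀ * XS)⁻¹ *ᵥ XSᵀ *ᵥ fun i => X i j
  have hgram := isUnit_transpose_mul_self (mulVec_injective_of_mul_sum_sq_le hΛ heig)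
  have horth : (∑ i, X i j * (XS *ᵥ r) i) / n ≤ θ * √(∑ k, r k ^ 2) := by
    have := hθ {j} S (disjoint_singleton_left.2 hj) (card_singleton j).le hScard (fun _ => 1) r
    simp only [of_singleton_mulVec_one, ← hXS, one_pow, sum_const, card_univ, nsmul_eq_mul,
      mul_one, Fintype.card_coe, card_singleton, Nat.cast_one, Real.sqrt_one] at this
    exact (le_abs_self _).trans this
  have hr : √(∑ k, r k ^ 2) ≤ θ / Λ := by
    refine le_div_of_mul_sq_le_mul hΛ hθnn (Real.sqrt_nonneg _) ?_
    rw [Real.sq_sqrt (sum_nonneg fun k _ => sq_nonneg (r k))]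
    calc Λ * ∑ k, r k ^ 2 ≤ (∑ i, (XS *ᵥ r) i ^ 2) / n := heig r
      _ = (∑ i, X i j * (XS *ᵥ r) i) / n := by rw [sum_sq_mulVec_gram_inv hgram]
      _ ≤ θ * √(∑ k, r k ^ 2) := horth
  have hcard : √(Fintype.card {k // k ∈ S}) ≤ √s :=
    Real.sqrt_le_sqrt (by simpa using hScard)
  calc ∑ k, |r k| ≤ √(Fintype.card {k // k ∈ S}) * √(∑ k, r k ^ 2) :=
        Real.sum_abs_le_sqrt_card_mul_sqrt_sum_sq r
    _ ≤ √s * (θ / Λ) := mul_le_mul hcard hr (Real.sqrt_nonneg _) (Real.sqrt_nonneg _)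
    _ = θ * √s / Λ := by ring

/-- Bound on `r_n` via the restricted orthogonality constant: if the smallest
eigenvalue of `X_SᵀX_S/n` is at least `Λ > 0` and the `(1,s)`-restricted
orthogonality constant `θ` satisfies `|⟨X_T c, X_{T'} c'⟩|/n ≤ θ‖c‖₂‖c'‖₂`
for all disjoint `T, T'` with `|T| ≤ 1, |T'| ≤ s`, then for every `j ∉ S`,
`‖(X_SᵀX_S)⁻¹ X_Sᵀ X_j‖₁ ≤ θ √s / Λ`. -/
theorem rn_bound_via_restricted_orthogonality (n p s : ℕ) (hn : 0 < n)
    (X : Matrix (Fin n) (Fin p) ℝ)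
    (S : Finset (Fin p)) (hScard : S.card ≤ s)
    (Λ : ℝ) (hΛ : 0 < Λ)
    (XS : Matrix (Fin n) {j // j ∈ S} ℝ) (hXS : XS = Matrix.of fun i j => X i j.1)
    (heig : ∀ v : {j // j ∈ S} → ℝ,
      Λ * ∑ k, v k ^ 2 ≤ (∑ i, (XS.mulVec v i) ^ 2) / n)
    (θ : ℝ) (hθnn : 0 ≤ θ)
    (hθ : ∀ T T' : Finset (Fin p), Disjoint T T' → T.card ≤ 1 → T'.card ≤ s →
      ∀ (c : {j // j ∈ T} → ℝ) (c' : {j // j ∈ T'} → ℝ),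
        |(∑ i, ((Matrix.of fun i (j : {j // j ∈ T}) => X i j.1).mulVec c i) *
            ((Matrix.of fun i (j : {j // j ∈ T'}) => X i j.1).mulVec c' i)) / n| ≤
          θ * Real.sqrt (∑ k, c k ^ 2) * Real.sqrt (∑ k, c' k ^ 2)) :
    ∀ j ∉ S,
      (∑ k, |((XSᵀ * XS)⁻¹.mulVec (XSᵀ.mulVec fun i => X i j)) k|) ≤
        θ * Real.sqrt s / Λ :=
  rn_bound_via_restricted_orthogonality_general n p s X S hScard Λ hΛ XS hXS heig θ hθnn hθ
end

section
/- Let X have entries with max_{j,k}|XᵀX/n − Σ|_{jk} ≤ C₂√(log p/n), and suppose s ≤ (Λ_min(s)/(16 C₂))·√(n/log p), where Λ_min(s) satisfies λ_min(Σ_{SS}) ≥ (17/16)Λ_min(s) for every S with |S| ≤ s. Then for every subset S with |S| ≤ s, λ_min(X_SᵀX_S/n) ≥ Λ_min(s). -/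
/-!
On a support of size at most `s`, an entrywise perturbation of size `δ` moves the quadratic form
`vᵀ M v` by at most `δ (∑ |vₖ|)² ≤ s δ ‖v‖²` (Cauchy–Schwarz), and the sparsity condition makes
`s δ ≤ Λ/16`. So the `(17/16) Λ` lower bound for `Σ_{SS}` leaves `Λ` for `X_SᵀX_S / n`.
-/

open Finset Matrix

section QuadraticForm

variable {ι : Type*} [Fintype ι]

theorem abs_sum_sum_mul_mul_le (M : Matrix ι ι ℝ) {δ : ℝ} (hM : ∀ k l, |M k l| ≤ δ)
    (v : ι → ℝ) : |∑ k, ∑ l, v k * M k l * v l| ≤ δ * (∑ k, |v k|) ^ 2 := by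
  calc |∑ k, ∑ l, v k * M k l * v l| ≤ ∑ k, ∑ l, |v k| * δ * |v l| := by
        refine (abs_sum_le_sum_abs _ _).trans (sum_le_sum fun k _ => ?_)
        refine (abs_sum_le_sum_abs _ _).trans (sum_le_sum fun l _ => ?_)
        rw [abs_mul, abs_mul]
        gcongr
        exact hM k l
    _ = δ * (∑ k, |v k|) ^ 2 := by
        rw [sq, sum_mul_sum, mul_sum]
        exact sum_congr rfl fun k _ => by rw [mul_sum]; exact sum_congr rfl fun l _ => by ring

theorem sum_abs_sq_le_card_mul_sum_sq (v : ι → ℝ) :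
    (∑ k, |v k|) ^ 2 ≤ Fintype.card ι * ∑ k, v k ^ 2 := by
  simpa only [sq_abs, card_univ] using sq_sum_le_card_mul_sum_sq (s := univ) (f := fun k => |v k|)

theorem le_sum_sum_mul_mul_of_abs_sub_le (A B : Matrix ι ι ℝ) {δ ε c : ℝ}
    (hAB : ∀ k l, |A k l - B k l| ≤ δ) (hδ : 0 ≤ δ) (hε : Fintype.card ι * δ ≤ ε) (v : ι → ℝ)
    (hB : c * ∑ k, v k ^ 2 ≤ ∑ k, ∑ l, v k * B k l * v l) :
    (c - ε) * ∑ k, v k ^ 2 ≤ ∑ k, ∑ l, v k * A k l * v l := by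
  have hdiff := abs_sum_sum_mul_mul_le (A - B) hAB v
  simp only [Matrix.sub_apply, mul_sub, sub_mul, sum_sub_distrib] at hdiff
  have hcs := mul_le_mul_of_nonneg_left (sum_abs_sq_le_card_mul_sum_sq v) hδ
  have hε_mul := mul_le_mul_of_nonneg_right hε (by positivity : (0 : ℝ) ≤ ∑ k, v k ^ 2)
  nlinarith [(abs_le.mp hdiff).1]

end QuadraticForm

theorem sum_mulVec_sq_eq_sum_sum {m ι : Type*} [Fintype m] [Fintype ι] (Y : Matrix m ι ℝ)
    (v : ι → ℝ) : ∑ i, (Y *ᵥ v) i ^ 2 = ∑ k, ∑ l, v k * (∑ i, Y i k * Y i l) * v l := by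
  simp only [mulVec, dotProduct, sq, sum_mul_sum]
  rw [sum_comm]
  refine sum_congr rfl fun k _ => ?_
  rw [sum_comm]
  refine sum_congr rfl fun l _ => ?_
  rw [mul_sum, sum_mul]
  exact sum_congr rfl fun i _ => by ring

theorem mul_mul_sqrt_div_le {s C ε x y : ℝ} (hC : 0 < C) (hε : 0 ≤ ε) (hx : 0 ≤ x) (hy : 0 ≤ y)
    (hs : s ≤ ε / C * √(x / y)) : s * (C * √(y / x)) ≤ ε := by
  have hsqrt : √(x / y) * √(y / x) ≤ 1 := by
    rw [← Real.sqrt_mul' _ (div_nonneg hy hx), div_mul_div_comm, mul_comm x y]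
    exact Real.sqrt_le_one.mpr (div_self_le_one _)
  calc s * (C * √(y / x)) ≤ ε / C * √(x / y) * (C * √(y / x)) := by gcongr
    _ = ε * (√(x / y) * √(y / x)) := by field_simp
    _ ≤ ε := mul_le_of_le_one_right hε hsqrt

theorem eigenvalue_lower_bound_empirical_general (n p s : ℕ)
    (X : Matrix (Fin n) (Fin p) ℝ) (Sig : Matrix (Fin p) (Fin p) ℝ)
    (C₂ : ℝ) (hC₂ : 0 < C₂) (Λ : ℝ) (hΛ : 0 < Λ)
    (hΔ : ∀ j k, |(∑ i, X i j * X i k) / n - Sig j k| ≤ C₂ * Real.sqrt (Real.log p / n))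
    (hs : (s : ℝ) ≤ Λ / (16 * C₂) * Real.sqrt (n / Real.log p))
    (heig : ∀ S : Finset (Fin p), S.card ≤ s → ∀ v : {j // j ∈ S} → ℝ,
      (17 / 16) * Λ * ∑ k, v k ^ 2 ≤
        ∑ k, ∑ l, v k * Sig k.1 l.1 * v l) :
    ∀ S : Finset (Fin p), S.card ≤ s → ∀ v : {j // j ∈ S} → ℝ,
      Λ * ∑ k, v k ^ 2 ≤
        (∑ i, ((Matrix.of fun i (j : {j // j ∈ S}) => X i j.1).mulVec v i) ^ 2) / n := by
  intro S hS v
  set δ := C₂ * Real.sqrt (Real.log p / n)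
  have hsδ : (s : ℝ) * δ ≤ Λ / 16 := by
    refine mul_mul_sqrt_div_le hC₂ (by positivity) n.cast_nonneg (Real.log_natCast_nonneg p) ?_
    rwa [div_div]
  have hcard : (Fintype.card {j // j ∈ S} : ℝ) * δ ≤ Λ / 16 :=
    le_trans (by gcongr; rw [Fintype.card_coe]; exact_mod_cast hS) hsδ
  have hperturbed := le_sum_sum_mul_mul_of_abs_sub_le
    (fun k l : {j // j ∈ S} => (∑ i, X i k.1 * X i l.1) / n) (fun k l => Sig k.1 l.1)
    (fun k l => hΔ k.1 l.1) (by positivity) hcard v (heig S hS v)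
  rw [sum_mulVec_sq_eq_sum_sum, sum_div]
  convert hperturbed using 1
  · ring
  · refine sum_congr rfl fun k _ => ?_
    rw [sum_div]
    exact sum_congr rfl fun l _ => by simp only [of_apply]; ring

/-- If `XᵀX/n` is entrywise within `C₂√(log p/n)` of `Σ`,
`s ≤ (Λ/(16C₂))·√(n/log p)`, and `λ_min(Σ_{SS}) ≥ (17/16)Λ` for every `S` with
`|S| ≤ s` (stated via quadratic forms), then `λ_min(X_SᵀX_S/n) ≥ Λ` for every
subset `S` with `|S| ≤ s`. -/
theorem eigenvalue_lower_bound_empirical (n p s : ℕ) (hn : 0 < n) (hp : 2 ≤ p)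
    (X : Matrix (Fin n) (Fin p) ℝ) (Sig : Matrix (Fin p) (Fin p) ℝ)
    (hsym : Sig.IsSymm) (C₂ : ℝ) (hC₂ : 0 < C₂) (Λ : ℝ) (hΛ : 0 < Λ)
    (hΔ : ∀ j k, |(∑ i, X i j * X i k) / n - Sig j k| ≤ C₂ * Real.sqrt (Real.log p / n))
    (hs : (s : ℝ) ≤ Λ / (16 * C₂) * Real.sqrt (n / Real.log p))
    (heig : ∀ S : Finset (Fin p), S.card ≤ s → ∀ v : {j // j ∈ S} → ℝ,
      (17 / 16) * Λ * ∑ k, v k ^ 2 ≤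
        ∑ k, ∑ l, v k * Sig k.1 l.1 * v l) :
    ∀ S : Finset (Fin p), S.card ≤ s → ∀ v : {j // j ∈ S} → ℝ,
      Λ * ∑ k, v k ^ 2 ≤
        (∑ i, ((Matrix.of fun i (j : {j // j ∈ S}) => X i j.1).mulVec v i) ^ 2) / n :=
  eigenvalue_lower_bound_empirical_general n p s X Sig C₂ hC₂ Λ hΛ hΔ hs heig
end

section
/- (KKT characterization for the weighted Lasso.) Consider Y = Xβ* + ε with supp(β*) = S, positive weights w ∈ ℝᵖ, λ > 0, and assume X_SᵀX_S is invertible. Set b = (sgn(β*_j)w_j)_{j∈S} and Σ̂ = XᵀX/n. There exists a minimizer β̂ of (1/2n)‖Y − Xβ‖₂² + λΣ_j w_j|β_j| with sgn(β̂) = sgn(β*) if and only if (i) |Σ̂_{SᶜS}(Σ̂_{SS})⁻¹(X_Sᵀε/n − λb) − X_{Sᶜ}ᵀε/n| ≤ λ w_{Sᶜ} componentwise, and (ii) sgn(β*_S + (Σ̂_{SS})⁻¹(X_Sᵀε/n − λb)) = sgn(β*_S). -/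
open Finset Matrix

/-- Componentwise sign, with `sgn 0 = 0`. -/
noncomputable def sgn (x : ℝ) : ℝ := if 0 < x then 1 else if x < 0 then -1 else 0

/-!
The objective is convex, so `β̂` minimizes it iff the residual correlation `c = Xᵀ(Y − Xβ̂)/n`
lies in `λ` times the subdifferential of `β ↦ ∑ wⱼ|βⱼ|` at `β̂`: `|cⱼ| ≤ λwⱼ`, with
`cⱼ = λwⱼ sgn β̂ⱼ` where `β̂ⱼ ≠ 0`. Necessity comes from perturbing one coordinate and letting
the step tend to `0`, sufficiency from the exact expansion of the objective around `β̂`.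

If `sgn β̂ = sgn β*`, then `β̂ − β*` is supported on `S` and the equalities on `S` are the normal
equations `Σ̂_SS (β̂ − β*)_S = X_Sᵀε/n − λb`, whose unique solution is `v`. So the only candidate
is `β*` plus `v` extended by zero; it has the sign pattern of `β*` iff (ii) holds, and then the
remaining conditions, those off `S`, are exactly (i).
-/

open Filter Topology

lemma sgn_eq_zero_iff {x : ℝ} : sgn x = 0 ↔ x = 0 := by
  unfold sgn
  split_ifs with hpos hneg <;> simp <;> grind

lemma sgn_mul_self (x : ℝ) : sgn x * x = |x| := by
  unfold sgn
  split_ifs with hpos hneg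
  · simp [abs_of_pos hpos]
  · simp [abs_of_neg hneg]
  · simp [le_antisymm (not_lt.1 hpos) (not_lt.1 hneg)]

lemma abs_sgn_of_ne_zero {x : ℝ} (hx : x ≠ 0) : |sgn x| = 1 := by
  unfold sgn
  split_ifs with hpos hneg <;> simp
  exact hx (le_antisymm (not_lt.1 hpos) (not_lt.1 hneg))

lemma abs_add_of_abs_le {x t : ℝ} (h : |t| ≤ |x|) : |x + t| = |x| + sgn x * t := by
  rcases lt_trichotomy x 0 with hx | rfl | hx
  · rw [abs_of_neg hx] at h ⊢
    rw [abs_of_nonpos (by linarith [le_abs_self t]), sgn, if_neg hx.not_gt, if_pos hx]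
    ring
  · simp_all
  · rw [abs_of_pos hx] at h ⊢
    rw [abs_of_nonneg (by linarith [neg_abs_le t]), sgn, if_pos hx]
    ring

lemma nonpos_of_eventually_mul_le_sq_mul {x A : ℝ}
    (h : ∀ᶠ t in 𝓝[>] (0 : ℝ), t * x ≤ t ^ 2 * A) : x ≤ 0 := by
  have hlim : Tendsto (fun t => t * A) (𝓝[>] (0 : ℝ)) (𝓝 0) := by
    simpa using ((continuous_mul_const A).tendsto 0).mono_left nhdsWithin_le_nhds
  refine ge_of_tendsto hlim ?_
  filter_upwards [h, self_mem_nhdsWithin] with t ht (htpos : 0 < t)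
  nlinarith

lemma eq_zero_of_eventually_mul_le_sq_mul {x A : ℝ}
    (h : ∀ᶠ t in 𝓝 (0 : ℝ), t * x ≤ t ^ 2 * A) : x = 0 := by
  have hneg : ∀ᶠ t in 𝓝 (0 : ℝ), t * -x ≤ t ^ 2 * A := by
    have := (continuous_neg.tendsto' (0 : ℝ) 0 neg_zero).eventually h
    filter_upwards [this] with t ht
    linarith [show (-t) ^ 2 = t ^ 2 by ring]
  have h₁ := nonpos_of_eventually_mul_le_sq_mul (nhdsWithin_le_nhds h)
  have h₂ := nonpos_of_eventually_mul_le_sq_mul (nhdsWithin_le_nhds hneg)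
  linarith

lemma abs_le_and_eq_mul_sgn_of_forall_mul_le {b c A κ : ℝ} (hκ : 0 ≤ κ)
    (h : ∀ t, t * c ≤ t ^ 2 * A + κ * (|b + t| - |b|)) :
    |c| ≤ κ ∧ (b ≠ 0 → c = κ * sgn b) := by
  by_cases hb : b = 0
  · subst hb
    have hup : c - κ ≤ 0 := nonpos_of_eventually_mul_le_sq_mul (A := A) <| by
      filter_upwards [self_mem_nhdsWithin] with t (ht : 0 < t)
      have := h t
      rw [zero_add, abs_zero, abs_of_pos ht] at this
      linarith
    have hlow : -c - κ ≤ 0 := nonpos_of_eventually_mul_le_sq_mul (A := A) <| by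
      filter_upwards [self_mem_nhdsWithin] with t (ht : 0 < t)
      have := h (-t)
      rw [zero_add, abs_zero, abs_neg, abs_of_pos ht] at this
      linarith [show (-t) ^ 2 = t ^ 2 by ring]
    exact ⟨abs_le.2 ⟨by linarith, by linarith⟩, fun h0 => (h0 rfl).elim⟩
  · have hsub : c - κ * sgn b = 0 := eq_zero_of_eventually_mul_le_sq_mul (A := A) <| by
      filter_upwards [Metric.closedBall_mem_nhds (0 : ℝ) (abs_pos.2 hb)] with t ht
      have := h t
      rw [abs_add_of_abs_le (by simpa using ht)] at this
      linarith
    have hc : c = κ * sgn b := by linarith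
    refine ⟨?_, fun _ => hc⟩
    rw [hc, abs_mul, abs_sgn_of_ne_zero hb, abs_of_nonneg hκ, mul_one]

lemma mul_le_of_abs_le_of_eq_mul_sgn {b c κ : ℝ} (hc : |c| ≤ κ) (hb : b ≠ 0 → c = κ * sgn b)
    (d : ℝ) : d * c ≤ κ * (|b + d| - |b|) := by
  have hbc : b * c = κ * |b| := by
    by_cases h0 : b = 0
    · simp [h0]
    · rw [hb h0, ← sgn_mul_self]; ring
  have := (le_abs_self _).trans ((abs_mul (b + d) c).trans_le
    (mul_le_mul_of_nonneg_left hc (abs_nonneg _)))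
  linarith

section Lasso

variable {m ι : Type*} [Fintype m] [Fintype ι]
  (n : ℝ) (X : Matrix m ι ℝ) (Y : m → ℝ) (w : ι → ℝ) (lam : ℝ)

noncomputable def lassoObjective (β : ι → ℝ) : ℝ :=
  1 / (2 * n) * ∑ i, (Y i - (X *ᵥ β) i) ^ 2 + lam * ∑ j, w j * |β j|

noncomputable def residualCorrelation (β : ι → ℝ) (j : ι) : ℝ :=
  (Xᵀ *ᵥ (Y - X *ᵥ β)) j / n

def LassoKKT (β : ι → ℝ) : Prop :=
  ∀ j, |residualCorrelation n X Y β j| ≤ lam * w j ∧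
    (β j ≠ 0 → residualCorrelation n X Y β j = lam * w j * sgn (β j))

lemma lassoObjective_add (β δ : ι → ℝ) :
    lassoObjective n X Y w lam (β + δ) =
      lassoObjective n X Y w lam β + 1 / (2 * n) * ∑ i, (X *ᵥ δ) i ^ 2 +
        ∑ j, (lam * w j * (|β j + δ j| - |β j|) - δ j * residualCorrelation n X Y β j) := by
  have hcross : ∑ i, (Y - X *ᵥ β) i * (X *ᵥ δ) i = ∑ j, δ j * (Xᵀ *ᵥ (Y - X *ᵥ β)) j := by
    simpa [dotProduct, mulVec_transpose, mul_comm] using dotProduct_mulVec (Y - X *ᵥ β) X δ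
  have hsq : ∑ i, (Y i - (X *ᵥ (β + δ)) i) ^ 2 = ∑ i, (Y i - (X *ᵥ β) i) ^ 2
      - 2 * ∑ i, (Y - X *ᵥ β) i * (X *ᵥ δ) i + ∑ i, (X *ᵥ δ) i ^ 2 := by
    simp only [mulVec_add, Pi.add_apply, Pi.sub_apply, mul_sum, ← sum_sub_distrib,
      ← sum_add_distrib]
    exact sum_congr rfl fun i _ => by ring
  have hpen : ∑ j, (lam * w j * (|β j + δ j| - |β j|) - δ j * residualCorrelation n X Y β j) =
      lam * ∑ j, w j * |β j + δ j| - lam * ∑ j, w j * |β j|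
        - (∑ j, δ j * (Xᵀ *ᵥ (Y - X *ᵥ β)) j) / n := by
    simp only [residualCorrelation, mul_sum, sum_div, ← sum_sub_distrib]
    exact sum_congr rfl fun j _ => by ring
  rw [lassoObjective, lassoObjective, hsq, hpen, ← hcross]
  simp only [Pi.add_apply]
  field_simp
  ring

variable {n X Y w lam}

theorem lassoObjective_le_of_lassoKKT (hn : 0 ≤ n) {β : ι → ℝ} (hβ : LassoKKT n X Y w lam β)
    (β' : ι → ℝ) : lassoObjective n X Y w lam β ≤ lassoObjective n X Y w lam β' := by
  have hquad : 0 ≤ 1 / (2 * n) * ∑ i, (X *ᵥ (β' - β)) i ^ 2 := by positivity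
  have hlin : 0 ≤ ∑ j, (lam * w j * (|β j + (β' - β) j| - |β j|) -
      (β' - β) j * residualCorrelation n X Y β j) :=
    sum_nonneg fun j _ => sub_nonneg.2 <|
      mul_le_of_abs_le_of_eq_mul_sgn (hβ j).1 (hβ j).2 ((β' - β) j)
  have := lassoObjective_add n X Y w lam β (β' - β)
  rw [add_sub_cancel] at this
  linarith

theorem lassoKKT_of_isMin (hlam : 0 ≤ lam) (hw : ∀ j, 0 ≤ w j) {β : ι → ℝ}
    (hβ : ∀ β', lassoObjective n X Y w lam β ≤ lassoObjective n X Y w lam β') :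
    LassoKKT n X Y w lam β := by
  classical
  intro j
  refine abs_le_and_eq_mul_sgn_of_forall_mul_le (A := 1 / (2 * n) * ∑ i, X i j ^ 2)
    (mul_nonneg hlam (hw j)) fun t => ?_
  have hstep := lassoObjective_add n X Y w lam β (Pi.single j t)
  have hpen : ∑ k, (lam * w k * (|β k + (Pi.single j t : ι → ℝ) k| - |β k|) -
      (Pi.single j t : ι → ℝ) k * residualCorrelation n X Y β k) =
      lam * w j * (|β j + t| - |β j|) - t * residualCorrelation n X Y β j := by
    rw [sum_eq_single j (fun k _ hk => by simp [hk]) (by simp)]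
    simp
  have hquad : ∑ i, (X *ᵥ Pi.single j t) i ^ 2 = t ^ 2 * ∑ i, X i j ^ 2 := by
    simp only [mulVec_single, mul_sum]
    exact sum_congr rfl fun i _ => by simp [mul_pow, mul_comm]
  rw [hpen, hquad] at hstep
  linarith [hβ (β + Pi.single j t)]

theorem isMin_lassoObjective_iff (hn : 0 ≤ n) (hlam : 0 ≤ lam) (hw : ∀ j, 0 ≤ w j)
    (β : ι → ℝ) :
    (∀ β', lassoObjective n X Y w lam β ≤ lassoObjective n X Y w lam β') ↔
      LassoKKT n X Y w lam β :=
  ⟨lassoKKT_of_isMin hlam hw, lassoObjective_le_of_lassoKKT hn⟩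

end Lasso

section SignConsistency

lemma mulVec_eq_submatrix_mulVec {m ι : Type*} [Fintype ι] (X : Matrix m ι ℝ) {S : Finset ι}
    {δ : ι → ℝ} (hδ : ∀ j ∉ S, δ j = 0) :
    X *ᵥ δ = X.submatrix id Subtype.val *ᵥ fun k : S => δ k := by
  funext i
  simp only [mulVec, dotProduct, submatrix_apply, id]
  rw [sum_coe_sort S (fun j => X i j * δ j)]
  exact (sum_subset (subset_univ S) fun j _ hj => by rw [hδ j hj, mul_zero]).symm

variable {m ι : Type*} [Fintype m] [Fintype ι] [DecidableEq ι]
  {n lam : ℝ} {X : Matrix m ι ℝ} {w : ι → ℝ} {S : Finset ι}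

lemma lassoKKT_iff_of_support (hlam : 0 ≤ lam) (hw : ∀ j, 0 ≤ w j) {Y : m → ℝ} {β : ι → ℝ}
    (hS : ∀ j, j ∈ S ↔ β j ≠ 0) :
    LassoKKT n X Y w lam β ↔
      (∀ j ∈ S, residualCorrelation n X Y β j = lam * w j * sgn (β j)) ∧
        ∀ j ∉ S, |residualCorrelation n X Y β j| ≤ lam * w j := by
  refine ⟨fun h => ⟨fun j hj => (h j).2 ((hS j).1 hj), fun j _ => (h j).1⟩,
    fun ⟨hon, hoff⟩ j => ?_⟩
  by_cases hj : j ∈ S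
  · refine ⟨?_, fun _ => hon j hj⟩
    rw [hon j hj, abs_mul, abs_sgn_of_ne_zero ((hS j).1 hj),
      abs_of_nonneg (mul_nonneg hlam (hw j)), mul_one]
  · exact ⟨hoff j hj, fun h0 => absurd ((hS j).2 h0) hj⟩

lemma forall_normal_equation_iff {κ : Type*} [Fintype κ] [DecidableEq κ] (hn : n ≠ 0)
    {A : Matrix m κ ℝ} (hA : IsUnit (Aᵀ * A).det) (ε : m → ℝ) (g u : κ → ℝ) :
    (∀ k, (Aᵀ *ᵥ (ε - A *ᵥ u)) k / n = g k) ↔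
      u = ((1 / n) • (Aᵀ * A))⁻¹ *ᵥ fun k => (Aᵀ *ᵥ ε) k / n - g k := by
  set G := (1 / n) • (Aᵀ * A)
  have hG : IsUnit G.det := by
    rw [det_smul]
    exact (isUnit_iff_ne_zero.2 (by simpa using hn)).pow _ |>.mul hA
  calc (∀ k, (Aᵀ *ᵥ (ε - A *ᵥ u)) k / n = g k)
      ↔ G *ᵥ u = fun k => (Aᵀ *ᵥ ε) k / n - g k := by
        rw [funext_iff]
        refine forall_congr' fun k => ?_
        simp only [G, smul_mulVec, ← mulVec_mulVec, mulVec_sub, Pi.sub_apply, Pi.smul_apply,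
          smul_eq_mul]
        constructor <;> intro h <;> field_simp at h ⊢ <;> linarith
    _ ↔ _ := ⟨fun h => by rw [← h, mulVec_mulVec, nonsing_inv_mul _ hG, one_mulVec],
        fun h => by rw [h, mulVec_mulVec, mul_nonsing_inv _ hG, one_mulVec]⟩

variable {βstar : ι → ℝ} {ε : m → ℝ} {XS : Matrix m S ℝ} {v : S → ℝ}

lemma lassoKKT_add_iff_of_sgn_eq (hn : n ≠ 0) (hlam : 0 ≤ lam) (hw : ∀ j, 0 ≤ w j)
    (hS : ∀ j, j ∈ S ↔ βstar j ≠ 0) (hXS : XS = X.submatrix id Subtype.val)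
    (hinv : IsUnit (XSᵀ * XS).det)
    (hv : v = ((1 / n) • (XSᵀ * XS))⁻¹ *ᵥ
      fun k => (Xᵀ *ᵥ ε) k / n - lam * (sgn (βstar k) * w k))
    (δ : ι → ℝ) (hδ : ∀ j ∉ S, δ j = 0) (hsgn : ∀ j, sgn (βstar j + δ j) = sgn (βstar j)) :
    LassoKKT n X (X *ᵥ βstar + ε) w lam (βstar + δ) ↔
      (fun k : S => δ k) = v ∧
        ∀ j ∉ S, |(Xᵀ *ᵥ (XS *ᵥ v)) j / n - (Xᵀ *ᵥ ε) j / n| ≤ lam * w j := by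
  classical
  subst hXS
  have hsupp : ∀ j, j ∈ S ↔ (βstar + δ) j ≠ 0 := fun j => by
    rw [hS j, Pi.add_apply, Ne, Ne, ← sgn_eq_zero_iff, ← sgn_eq_zero_iff (x := βstar j + δ j),
      hsgn j]
  have hcorr : ∀ j, residualCorrelation n X (X *ᵥ βstar + ε) (βstar + δ) j =
      (Xᵀ *ᵥ (ε - X.submatrix id Subtype.val *ᵥ fun k : S => δ k)) j / n := fun j => by
    rw [residualCorrelation, ← mulVec_eq_submatrix_mulVec X hδ, mulVec_add,
      add_sub_add_left_eq_sub]
  have hon : (∀ j ∈ S, residualCorrelation n X (X *ᵥ βstar + ε) (βstar + δ) j =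
      lam * w j * sgn ((βstar + δ) j)) ↔ (fun k : S => δ k) = v := by
    rw [hv]
    refine Iff.trans ?_ (forall_normal_equation_iff hn hinv ε _ _)
    rw [Subtype.forall]
    refine forall₂_congr fun j _ => ?_
    rw [hcorr, Pi.add_apply, hsgn, mul_assoc, mul_comm (w j)]
    rfl
  rw [lassoKKT_iff_of_support hlam hw hsupp, hon]
  refine and_congr_right fun hδv => forall₂_congr fun j _ => ?_
  rw [hcorr, hδv, mulVec_sub, Pi.sub_apply, sub_div, abs_sub_comm]

theorem exists_isMin_lassoObjective_sgn_eq_iff (hn : 0 < n) (hlam : 0 ≤ lam)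
    (hw : ∀ j, 0 ≤ w j) (hS : ∀ j, j ∈ S ↔ βstar j ≠ 0) (hXS : XS = X.submatrix id Subtype.val)
    (hinv : IsUnit (XSᵀ * XS).det)
    (hv : v = ((1 / n) • (XSᵀ * XS))⁻¹ *ᵥ
      fun k => (Xᵀ *ᵥ ε) k / n - lam * (sgn (βstar k) * w k)) :
    (∃ βhat, (∀ β, lassoObjective n X (X *ᵥ βstar + ε) w lam βhat ≤
        lassoObjective n X (X *ᵥ βstar + ε) w lam β) ∧ ∀ j, sgn (βhat j) = sgn (βstar j)) ↔
      (∀ j ∉ S, |(Xᵀ *ᵥ (XS *ᵥ v)) j / n - (Xᵀ *ᵥ ε) j / n| ≤ lam * w j) ∧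
        ∀ k : S, sgn (βstar k + v k) = sgn (βstar k) := by
  have hkkt := lassoKKT_add_iff_of_sgn_eq hn.ne' hlam hw hS hXS hinv hv
  have hmin := isMin_lassoObjective_iff (X := X) (Y := X *ᵥ βstar + ε) hn.le hlam hw
  constructor
  · rintro ⟨βhat, hβhat, hsgn⟩
    obtain ⟨δ, rfl⟩ : ∃ δ, βhat = βstar + δ := ⟨βhat - βstar, by abel⟩
    have hδ : ∀ j ∉ S, δ j = 0 := fun j hj => by
      have h0 : βstar j = 0 := not_not.1 (mt (hS j).2 hj)
      have := hsgn j
      rwa [Pi.add_apply, h0, zero_add, sgn_eq_zero_iff.2 rfl, sgn_eq_zero_iff] at this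
    obtain ⟨hδv, hi⟩ := (hkkt δ hδ hsgn).1 ((hmin _).1 hβhat)
    exact ⟨hi, fun k => hδv ▸ hsgn k⟩
  · rintro ⟨hi, hii⟩
    set δ : ι → ℝ := Function.extend Subtype.val v 0
    have hδv : (fun k : S => δ k) = v := funext (Subtype.val_injective.extend_apply v 0)
    have hδ : ∀ j ∉ S, δ j = 0 := fun j hj =>
      Function.extend_apply' _ _ _ fun ⟨k, hk⟩ => hj (hk ▸ k.2)
    have hsgn : ∀ j, sgn (βstar j + δ j) = sgn (βstar j) := fun j => by
      by_cases hj : j ∈ S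
      · simpa only [← hδv] using hii ⟨j, hj⟩
      · rw [hδ j hj, add_zero]
    exact ⟨βstar + δ, (hmin _).2 ((hkkt δ hδ hsgn).2 ⟨hδv, hi⟩), hsgn⟩

end SignConsistency

/-- KKT characterization for the weighted Lasso: for `Y = Xβ* + ε`,
`S = supp(β*)`, positive weights `w`, `λ > 0` and `X_SᵀX_S` invertible, there
exists a minimizer `β̂` of `(1/2n)‖Y − Xβ‖₂² + λ∑ⱼ wⱼ|βⱼ|` with
`sgn(β̂) = sgn(β*)` if and only if
(i) `|Σ̂_{SᶜS}(Σ̂_{SS})⁻¹(X_Sᵀε/n − λb) − X_{Sᶜ}ᵀε/n| ≤ λ w_{Sᶜ}` componentwise, and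
(ii) `sgn(β*_S + (Σ̂_{SS})⁻¹(X_Sᵀε/n − λb)) = sgn(β*_S)`,
where `b = (sgn(β*_j)w_j)_{j∈S}` and `Σ̂ = XᵀX/n`. -/
theorem weighted_lasso_KKT_characterization (n p : ℕ) (hn : 0 < n)
    (X : Matrix (Fin n) (Fin p) ℝ) (βstar : Fin p → ℝ) (ε : Fin n → ℝ)
    (w : Fin p → ℝ) (hw : ∀ j, 0 < w j) (lam : ℝ) (hlam : 0 < lam)
    (S : Finset (Fin p)) (hS : S = Finset.univ.filter (fun j => βstar j ≠ 0))
    (XS : Matrix (Fin n) {j // j ∈ S} ℝ) (hXS : XS = Matrix.of fun i j => X i j.1)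
    (hinv : IsUnit (XSᵀ * XS).det)
    (v : {j // j ∈ S} → ℝ)
    (hv : v = ((1 / (n : ℝ)) • (XSᵀ * XS))⁻¹.mulVec
      (fun k => (∑ i, X i k.1 * ε i) / n - lam * (sgn (βstar k.1) * w k.1))) :
    (∃ βhat : Fin p → ℝ,
        (∀ β : Fin p → ℝ,
          (1 / (2 * n)) *
              (∑ i, ((∑ j, X i j * βstar j) + ε i - ∑ j, X i j * βhat j) ^ 2)
            + lam * ∑ j, w j * |βhat j| ≤
          (1 / (2 * n)) *
              (∑ i, ((∑ j, X i j * βstar j) + ε i - ∑ j, X i j * β j) ^ 2)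
            + lam * ∑ j, w j * |β j|) ∧
        ∀ j, sgn (βhat j) = sgn (βstar j)) ↔
      ((∀ j ∉ S,
          |(∑ i, X i j * XS.mulVec v i) / n - (∑ i, X i j * ε i) / n| ≤ lam * w j) ∧
        ∀ k : {j // j ∈ S}, sgn (βstar k.1 + v k) = sgn (βstar k.1)) :=
  exists_isMin_lassoObjective_sgn_eq_iff (Nat.cast_pos.2 hn) hlam.le (fun j => (hw j).le)
    (fun j => by simp [hS]) hXS hinv hv
end
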